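/- Let z ∈ ℝⁿ take values in an interval of length M, with mean z̄ and empirical variance s². Then sup{⟨p, z⟩ : p a probability vector, (1/2)‖np - 1‖₂² ≤ ρ} ≥ z̄ + max(0, √(2ρ s²/n) - 2Mρ/n). -/

import Mathlib

/-!
Tilt the uniform weights along the centred data: `pᵢ = 1/n + t (zᵢ - z̄)` sums to one, has
χ²-divergence `n³ t² s² / 2` from uniform and gives the value `z̄ + t n s²`. Choosing `t` so the
divergence equals `ρ` yields `z̄ + √(2ρ s²/n)`; since `zᵢ - z̄ ≥ -M` the weights stay nonnegative
once `M √(2ρ s²/n) ≤ s²`, which is what `√(2ρ s²/n) > 2Mρ/n` gives. Otherwise the uniform weights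
(`t = 0`) already give `z̄`.
-/

open Finset Real

/-- The robust supremum `sup {⟨p, z⟩ : p a probability vector, (1/2)‖np - 1‖₂² ≤ ρ}`. -/
noncomputable def robustSup (n : ℕ) (ρ : ℝ) (z : Fin n → ℝ) : ℝ :=
  sSup {r : ℝ | ∃ p : Fin n → ℝ, (∀ i, 0 ≤ p i) ∧ (∑ i, p i) = 1 ∧
    (1 / 2) * (∑ i, ((n : ℝ) * p i - 1) ^ 2) ≤ ρ ∧ r = ∑ i, p i * z i}

/-- The empirical mean of `z`. -/
noncomputable def empMean (n : ℕ) (z : Fin n → ℝ) : ℝ := (1 / n) * ∑ i, z i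

/-- The empirical variance of `z`. -/
noncomputable def empVar (n : ℕ) (z : Fin n → ℝ) : ℝ :=
  (1 / n) * ∑ i, (z i - empMean n z) ^ 2

section RobustSup

variable {n : ℕ} {ρ : ℝ} (z : Fin n → ℝ)

lemma le_robustSup {p : Fin n → ℝ} (hp₀ : ∀ i, 0 ≤ p i) (hp₁ : ∑ i, p i = 1)
    (hpρ : (1 / 2) * ∑ i, ((n : ℝ) * p i - 1) ^ 2 ≤ ρ) :
    ∑ i, p i * z i ≤ robustSup n ρ z := by
  refine le_csSup ⟨∑ j, |z j|, ?_⟩ ⟨p, hp₀, hp₁, hpρ, rfl⟩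
  rintro r ⟨q, hq₀, hq₁, -, rfl⟩
  calc ∑ i, q i * z i ≤ ∑ i, q i * ∑ j, |z j| := by
        gcongr with i _
        · exact hq₀ i
        · exact (le_abs_self _).trans (single_le_sum (fun j _ => abs_nonneg (z j)) (mem_univ i))
    _ = ∑ j, |z j| := by rw [← sum_mul, hq₁, one_mul]

lemma sum_sub_empMean : ∑ i, (z i - empMean n z) = 0 := by
  rcases n.eq_zero_or_pos with rfl | hn
  · simp
  · simp [sum_sub_distrib, empMean, hn.ne']

lemma sum_sq_sub_empMean : ∑ i, (z i - empMean n z) ^ 2 = n * empVar n z := by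
  rcases n.eq_zero_or_pos with rfl | hn
  · simp
  · simp [empVar, hn.ne']

lemma sum_mul_sub_empMean : ∑ i, z i * (z i - empMean n z) = n * empVar n z := by
  rw [← sum_sq_sub_empMean, ← add_zero (∑ i, (z i - empMean n z) ^ 2),
    ← mul_zero (empMean n z), ← sum_sub_empMean, mul_sum, ← sum_add_distrib]
  exact sum_congr rfl fun i _ => by ring

lemma empVar_nonneg : 0 ≤ empVar n z := by
  unfold empVar
  positivity

lemma empMean_le {c : ℝ} (hn : 0 < n) (hz : ∀ i, z i ≤ c) : empMean n z ≤ c := by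
  have hn' : (0 : ℝ) < n := by exact_mod_cast hn
  have : ∑ i, z i ≤ n * c := by simpa using sum_le_sum fun i (_ : i ∈ univ) => hz i
  rw [empMean, one_div_mul_eq_div, div_le_iff₀ hn']
  linarith

noncomputable def tiltWeights (t : ℝ) (i : Fin n) : ℝ := 1 / n + t * (z i - empMean n z)

variable {z}

lemma tiltWeights_nonneg {t M : ℝ} (ht : 0 ≤ t) (hz : ∀ i, empMean n z - z i ≤ M)
    (htM : t * M ≤ 1 / n) (i : Fin n) : 0 ≤ tiltWeights z t i := by
  have := mul_le_mul_of_nonneg_left (hz i) ht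
  rw [tiltWeights]
  linarith

variable (z)

lemma sum_tiltWeights (hn : n ≠ 0) (t : ℝ) : ∑ i, tiltWeights z t i = 1 := by
  simp only [tiltWeights, sum_add_distrib, ← mul_sum, sum_sub_empMean, mul_zero, add_zero]
  simp [hn]

lemma chiSq_tiltWeights (t : ℝ) :
    (1 / 2) * ∑ i, ((n : ℝ) * tiltWeights z t i - 1) ^ 2 =
      (1 / 2) * n ^ 3 * t ^ 2 * empVar n z := by
  rcases n.eq_zero_or_pos with rfl | hn
  · simp
  have hn' : (n : ℝ) ≠ 0 := by positivity
  have hterm : ∀ i,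
      ((n : ℝ) * tiltWeights z t i - 1) ^ 2 = n ^ 2 * t ^ 2 * (z i - empMean n z) ^ 2 :=
    fun i => by rw [tiltWeights]; field_simp; ring
  rw [sum_congr rfl fun i _ => hterm i, ← mul_sum, sum_sq_sub_empMean]
  ring

lemma sum_tiltWeights_mul (t : ℝ) :
    ∑ i, tiltWeights z t i * z i = empMean n z + t * (n * empVar n z) := by
  simp only [tiltWeights, add_mul, sum_add_distrib, ← sum_mul_sub_empMean, mul_sum, empMean]
  congr 1
  exact sum_congr rfl fun i _ => by ring

lemma empMean_le_robustSup (hn : n ≠ 0) (hρ : 0 ≤ ρ) : empMean n z ≤ robustSup n ρ z := by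
  have h := le_robustSup (ρ := ρ) z (fun i => by simp [tiltWeights]) (sum_tiltWeights z hn 0)
    (by rw [chiSq_tiltWeights]; simpa using hρ)
  rwa [sum_tiltWeights_mul, zero_mul, add_zero] at h

lemma empMean_add_sqrt_le_robustSup {M : ℝ} (hn : n ≠ 0) (hρ : 0 ≤ ρ)
    (hspread : ∀ i, empMean n z - z i ≤ M)
    (hMV : M * √(2 * ρ * empVar n z / n) ≤ empVar n z) :
    empMean n z + √(2 * ρ * empVar n z / n) ≤ robustSup n ρ z := by
  rcases (empVar_nonneg z).eq_or_lt with hs2 | hs2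
  · simpa [← hs2] using empMean_le_robustSup z hn hρ
  have hn' : (0 : ℝ) < n := by positivity
  set V := √(2 * ρ * empVar n z / n)
  set t := V / (n * empVar n z)
  have htM : t * M ≤ 1 / n := by
    calc t * M = M * V / empVar n z / n := by simp only [t]; field_simp
      _ ≤ 1 / n := by gcongr; exact (div_le_one hs2).2 hMV
  have htρ : (1 / 2) * n ^ 3 * t ^ 2 * empVar n z = ρ := by
    simp only [t, V, div_pow, sq_sqrt (by positivity : 0 ≤ 2 * ρ * empVar n z / n)]
    field_simp
  have h := le_robustSup (ρ := ρ) z (tiltWeights_nonneg (by positivity) hspread htM)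
    (sum_tiltWeights z hn t) (by rw [chiSq_tiltWeights, htρ])
  rwa [sum_tiltWeights_mul, div_mul_cancel₀ _ (by positivity)] at h

end RobustSup

lemma mul_sqrt_le_of_lt_sqrt {M ρ s m : ℝ} (hm : 0 < m) (hρ : 0 ≤ ρ) (hs : 0 ≤ s)
    (h : 2 * M * ρ / m < √(2 * ρ * s / m)) : M * √(2 * ρ * s / m) ≤ s := by
  rcases (sqrt_nonneg (2 * ρ * s / m)).eq_or_lt with hV | hV
  · rwa [← hV, mul_zero]
  set V := √(2 * ρ * s / m)
  have hVsq : V ^ 2 * m = 2 * ρ * s := by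
    rw [sq_sqrt (by positivity), div_mul_cancel₀ _ hm.ne']
  rw [div_lt_iff₀ hm] at h
  nlinarith [mul_lt_mul_of_pos_right h hV]

theorem robustSup_ge_mean_add_truncated_sqrt_var (n : ℕ) (hn : 0 < n)
    (ρ : ℝ) (hρ : 0 ≤ ρ) (M₀ M : ℝ) (z : Fin n → ℝ)
    (hz : ∀ i, z i ∈ Set.Icc M₀ (M₀ + M)) :
    robustSup n ρ z ≥
      empMean n z + max 0 (Real.sqrt (2 * ρ * empVar n z / n) - 2 * M * ρ / n) := by
  have hn' : (0 : ℝ) < n := by exact_mod_cast hn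
  have hM : 0 ≤ M := by linarith [(hz ⟨0, hn⟩).1, (hz ⟨0, hn⟩).2]
  have hspread : ∀ i, empMean n z - z i ≤ M := fun i => by
    linarith [empMean_le z hn fun j => (hz j).2, (hz i).1]
  rcases le_or_gt (√(2 * ρ * empVar n z / n)) (2 * M * ρ / n) with hsmall | hlarge
  · rw [max_eq_left (by linarith), add_zero]
    exact empMean_le_robustSup z hn.ne' hρ
  · have hc : 0 ≤ 2 * M * ρ / n := by positivity
    calc empMean n z + max 0 (√(2 * ρ * empVar n z / n) - 2 * M * ρ / n)
        ≤ empMean n z + √(2 * ρ * empVar n z / n) := by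
          gcongr
          exact max_le (sqrt_nonneg _) (by linarith)
      _ ≤ robustSup n ρ z := empMean_add_sqrt_le_robustSup z hn.ne' hρ hspread
          (mul_sqrt_le_of_lt_sqrt hn' hρ (empVar_nonneg z) hlarge)
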